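/- arXiv:2206.13624 — 4 statements merged into one kernel-verified Lean document; each statement's English description precedes it below -/
import Mathlib

section
/- Let n and m be positive integers with m < n, let A be an n×n real symmetric matrix, let B be an m×n real matrix with rank m, let Z be an n×(n−m) real matrix whose columns form a basis of the kernel of B, and suppose ZᵀAZ is invertible. Set V = Z(ZᵀAZ)⁻¹Zᵀ and K = [[A, Bᵀ],[B, 0]]. Then K is invertible and K⁻¹ = [[V, (I − VA)Bᵀ(BBᵀ)⁻¹],[(BBᵀ)⁻¹B(I − AV), −(BBᵀ)⁻¹B(A − AVA)Bᵀ(BBᵀ)⁻¹]]. -/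
open Matrix

/-- A square real matrix of full rank is a unit. -/
lemma aux_isUnit_of_rank_eq {k : ℕ} (M : Matrix (Fin k) (Fin k) ℝ) (h : M.rank = k) :
    IsUnit M := by
  rw [Matrix.isUnit_iff_isUnit_det, isUnit_iff_ne_zero]
  intro hdet
  obtain ⟨v, hv, hMv⟩ := (Matrix.exists_mulVec_eq_zero_iff).2 hdet
  have hker : v ∈ LinearMap.ker M.mulVecLin := by
    simpa [Matrix.mulVecLin_apply] using hMv
  have hne : LinearMap.ker M.mulVecLin ≠ ⊥ := by
    intro hb
    rw [hb] at hker
    exact hv hker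
  have hpos : 0 < Module.finrank ℝ (LinearMap.ker M.mulVecLin) := by
    rcases Nat.eq_zero_or_pos (Module.finrank ℝ (LinearMap.ker M.mulVecLin)) with h0 | h0
    · exact absurd (Submodule.finrank_eq_zero.mp h0) hne
    · exact h0
  have hsum : M.rank + Module.finrank ℝ (LinearMap.ker M.mulVecLin) = k := by
    rw [Matrix.rank, LinearMap.finrank_range_add_finrank_ker]
    simp [Module.finrank_fintype_fun_eq_card]
  omega

/-- Complementary projections onto the row space of `B` and the column space of `Z`. -/
lemma aux_proj_sum {n m k : ℕ} (B : Matrix (Fin m) (Fin n) ℝ) (Z : Matrix (Fin n) (Fin k) ℝ)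
    (e : Fin n ≃ Fin m ⊕ Fin k) (hBZ : B * Z = 0)
    (hG : IsUnit (B * Bᵀ)) (hH : IsUnit (Zᵀ * Z)) :
    Bᵀ * (B * Bᵀ)⁻¹ * B + Z * (Zᵀ * Z)⁻¹ * Zᵀ = 1 := by
  have hZtBt : Zᵀ * Bᵀ = (0 : Matrix (Fin k) (Fin m) ℝ) := by
    have h := congrArg Matrix.transpose hBZ
    simpa [Matrix.transpose_mul] using h
  have hGd : IsUnit (B * Bᵀ).det := (Matrix.isUnit_iff_isUnit_det _).1 hG
  have hHd : IsUnit (Zᵀ * Z).det := (Matrix.isUnit_iff_isUnit_det _).1 hH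
  have hEF : Matrix.fromRows B Zᵀ *
      Matrix.fromCols (Bᵀ * (B * Bᵀ)⁻¹) (Z * (Zᵀ * Z)⁻¹) = 1 := by
    rw [Matrix.fromRows_mul_fromCols, ← Matrix.fromBlocks_one]
    have h11 : B * (Bᵀ * (B * Bᵀ)⁻¹) = 1 := by
      rw [← Matrix.mul_assoc]
      exact Matrix.mul_nonsing_inv _ hGd
    have h12 : B * (Z * (Zᵀ * Z)⁻¹) = 0 := by
      rw [← Matrix.mul_assoc, hBZ, Matrix.zero_mul]
    have h21 : Zᵀ * (Bᵀ * (B * Bᵀ)⁻¹) = 0 := by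
      rw [← Matrix.mul_assoc, hZtBt, Matrix.zero_mul]
    have h22 : Zᵀ * (Z * (Zᵀ * Z)⁻¹) = 1 := by
      rw [← Matrix.mul_assoc]
      exact Matrix.mul_nonsing_inv _ hHd
    rw [h11, h12, h21, h22]
  have hFE := (Matrix.fromCols_mul_fromRows_eq_one_comm e _ _ _ _).mpr hEF
  rw [Matrix.fromCols_mul_fromRows] at hFE
  simpa [Matrix.mul_assoc] using hFE

/-- explicit block formula for the inverse of the saddle-point matrix
`K = [[A, Bᵀ],[B, 0]]` with `A` symmetric, `B` of full row rank, `Z` a null-space matrix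
of `B` with `ZᵀAZ` invertible, and `V = Z (ZᵀAZ)⁻¹ Zᵀ`. -/
theorem saddle_inverse_block_formula {n m : ℕ} (hm : 0 < m) (hmn : m < n)
    (A : Matrix (Fin n) (Fin n) ℝ) (B : Matrix (Fin m) (Fin n) ℝ)
    (hA : A.IsSymm) (hrB : B.rank = m)
    (Z : Matrix (Fin n) (Fin (n - m)) ℝ) (hBZ : B * Z = 0) (hrZ : Z.rank = n - m)
    (hZAZ : IsUnit (Zᵀ * A * Z)) :
    IsUnit (Matrix.fromBlocks A Bᵀ B 0) ∧
    (Matrix.fromBlocks A Bᵀ B 0)⁻¹ =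
      Matrix.fromBlocks
        (Z * (Zᵀ * A * Z)⁻¹ * Zᵀ)
        ((1 - (Z * (Zᵀ * A * Z)⁻¹ * Zᵀ) * A) * Bᵀ * (B * Bᵀ)⁻¹)
        ((B * Bᵀ)⁻¹ * B * (1 - A * (Z * (Zᵀ * A * Z)⁻¹ * Zᵀ)))
        (-((B * Bᵀ)⁻¹ * B *
            (A - A * (Z * (Zᵀ * A * Z)⁻¹ * Zᵀ) * A) * Bᵀ * (B * Bᵀ)⁻¹)) := by
  -- abbreviations
  set V : Matrix (Fin n) (Fin n) ℝ := Z * (Zᵀ * A * Z)⁻¹ * Zᵀ with hV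
  -- basic unit facts
  have hG : IsUnit (B * Bᵀ) := by
    apply aux_isUnit_of_rank_eq
    rw [Matrix.rank_self_mul_transpose, hrB]
  have hH : IsUnit (Zᵀ * Z) := by
    apply aux_isUnit_of_rank_eq
    rw [Matrix.rank_transpose_mul_self, hrZ]
  have hGd : IsUnit (B * Bᵀ).det := (Matrix.isUnit_iff_isUnit_det _).1 hG
  have hWd : IsUnit (Zᵀ * A * Z).det := (Matrix.isUnit_iff_isUnit_det _).1 hZAZ
  have hGi : (B * Bᵀ) * (B * Bᵀ)⁻¹ = 1 := Matrix.mul_nonsing_inv _ hGd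
  have hWi : (Zᵀ * A * Z) * (Zᵀ * A * Z)⁻¹ = 1 := Matrix.mul_nonsing_inv _ hWd
  have e : Fin n ≃ Fin m ⊕ Fin (n - m) :=
    (finCongr (by omega : n = m + (n - m))).trans finSumFinEquiv.symm
  have hPQ : Bᵀ * (B * Bᵀ)⁻¹ * B + Z * (Zᵀ * Z)⁻¹ * Zᵀ = 1 :=
    aux_proj_sum B Z e hBZ hG hH
  set P : Matrix (Fin n) (Fin n) ℝ := Bᵀ * (B * Bᵀ)⁻¹ * B with hP
  have hQ : Z * (Zᵀ * Z)⁻¹ * Zᵀ = 1 - P := by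
    rw [← hPQ]; abel
  have hZtBt : Zᵀ * Bᵀ = (0 : Matrix (Fin (n - m)) (Fin m) ℝ) := by
    have h := congrArg Matrix.transpose hBZ
    simpa [Matrix.transpose_mul] using h
  have hBV : B * V = 0 := by
    rw [hV, ← Matrix.mul_assoc, ← Matrix.mul_assoc, hBZ, Matrix.zero_mul, Matrix.zero_mul]
  -- key identity: (1 - P) * (A * V) = 1 - P
  have hkey : (1 - P) * (A * V) = 1 - P := by
    rw [← hQ, hV]
    calc Z * (Zᵀ * Z)⁻¹ * Zᵀ * (A * (Z * (Zᵀ * A * Z)⁻¹ * Zᵀ))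
        = Z * (Zᵀ * Z)⁻¹ * ((Zᵀ * A * Z) * (Zᵀ * A * Z)⁻¹) * Zᵀ := by
          simp only [Matrix.mul_assoc]
      _ = Z * (Zᵀ * Z)⁻¹ * Zᵀ := by rw [hWi, Matrix.mul_one]
  -- the claimed inverse
  have hKM : Matrix.fromBlocks A Bᵀ B 0 *
      Matrix.fromBlocks V
        ((1 - V * A) * Bᵀ * (B * Bᵀ)⁻¹)
        ((B * Bᵀ)⁻¹ * B * (1 - A * V))
        (-((B * Bᵀ)⁻¹ * B * (A - A * V * A) * Bᵀ * (B * Bᵀ)⁻¹)) = 1 := by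
    rw [Matrix.fromBlocks_multiply, ← Matrix.fromBlocks_one]
    have e11 : A * V + Bᵀ * ((B * Bᵀ)⁻¹ * B * (1 - A * V)) = 1 := by
      have expand : A * V + Bᵀ * ((B * Bᵀ)⁻¹ * B * (1 - A * V))
          = P + (1 - P) * (A * V) := by
        rw [hP]
        simp only [Matrix.mul_sub, Matrix.sub_mul, Matrix.mul_one, Matrix.one_mul,
          Matrix.mul_assoc]
        abel
      rw [expand, hkey]
      abel
    have e12 : A * ((1 - V * A) * Bᵀ * (B * Bᵀ)⁻¹) +
        Bᵀ * -((B * Bᵀ)⁻¹ * B * (A - A * V * A) * Bᵀ * (B * Bᵀ)⁻¹) = 0 := by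
      have h3 : (1 - P) * (A - A * V * A) = 0 := by
        have hx : (1 - P) * (A - A * V * A) = (1 - P) * A - ((1 - P) * (A * V)) * A := by
          simp only [Matrix.mul_sub, Matrix.sub_mul, Matrix.one_mul, Matrix.mul_assoc]
        rw [hx, hkey]
        abel
      have expand : A * ((1 - V * A) * Bᵀ * (B * Bᵀ)⁻¹) +
          Bᵀ * -((B * Bᵀ)⁻¹ * B * (A - A * V * A) * Bᵀ * (B * Bᵀ)⁻¹)
          = ((1 - P) * (A - A * V * A)) * (Bᵀ * (B * Bᵀ)⁻¹) := by
        rw [hP]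
        simp only [Matrix.mul_sub, Matrix.sub_mul, Matrix.mul_one, Matrix.one_mul,
          Matrix.mul_neg, Matrix.neg_mul, Matrix.mul_assoc]
        abel
      rw [expand, h3, Matrix.zero_mul]
    have e21 : B * V + (0 : Matrix (Fin m) (Fin m) ℝ) * ((B * Bᵀ)⁻¹ * B * (1 - A * V)) = 0 := by
      rw [hBV, Matrix.zero_mul, add_zero]
    have e22 : B * ((1 - V * A) * Bᵀ * (B * Bᵀ)⁻¹) +
        (0 : Matrix (Fin m) (Fin m) ℝ) * -((B * Bᵀ)⁻¹ * B * (A - A * V * A) * Bᵀ * (B * Bᵀ)⁻¹) = 1 := by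
      rw [Matrix.zero_mul, add_zero]
      have expand : B * ((1 - V * A) * Bᵀ * (B * Bᵀ)⁻¹)
          = (B * Bᵀ) * (B * Bᵀ)⁻¹ - (B * V) * (A * (Bᵀ * (B * Bᵀ)⁻¹)) := by
        simp only [Matrix.mul_sub, Matrix.sub_mul, Matrix.mul_one, Matrix.one_mul,
          Matrix.mul_assoc]
      rw [expand, hBV, Matrix.zero_mul, sub_zero, hGi]
    rw [e11, e12, e21, e22]
  refine ⟨?_, Matrix.inv_eq_right_inv hKM⟩
  exact (Matrix.isUnit_iff_isUnit_det _).2 (Matrix.isUnit_det_of_right_inverse hKM)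
end

section
/- Let n and m be positive integers with m < n, let A be an n×n real matrix, let B be an m×n real matrix with rank m, let Z be an n×(n−m) real matrix whose columns form a basis of the kernel of B, and suppose ZᵀAZ is invertible. Set V = Z(ZᵀAZ)⁻¹Zᵀ. Then (I − V·A)·Bᵀ·(BBᵀ)⁻¹·B = I − V·A, where I is the n×n identity matrix; equivalently, Bᵀ(BBᵀ)⁻¹B·(I − A·V) = I − A·V. -/
/-!
Since `BBᵀ` is invertible, `1 - Bᵀ(BBᵀ)⁻¹B` is annihilated by `B`, so its columns lie in
`ker B`, which by rank–nullity is the column space of `Z`. On the other hand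
`VAZ = Z(ZᵀAZ)⁻¹(ZᵀAZ) = Z`, so `1 - VA` kills the column space of `Z`, hence
`(1 - VA)(1 - Bᵀ(BBᵀ)⁻¹B) = 0`. The second identity is the transpose of the first for `Aᵀ`.
-/

open Matrix

namespace Matrix

variable {l m n k R : Type*} [Fintype n] [Fintype k]

theorem mul_eq_zero_iff_range_le_ker [CommRing R] (M : Matrix l n R) (Y : Matrix n k R) :
    M * Y = 0 ↔ LinearMap.range Y.mulVecLin ≤ LinearMap.ker M.mulVecLin := by
  classical
  rw [LinearMap.range_le_ker_iff, ← mulVecLin_mul, ← mulVecLin_zero, ← toLin'_apply',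
    ← toLin'_apply']
  exact toLin'.injective.eq_iff.symm

theorem range_mulVecLin_eq_ker_of_rank_add_rank [Field R] {B : Matrix m n R}
    {Z : Matrix n k R} (hBZ : B * Z = 0) (hrank : B.rank + Z.rank = Fintype.card n) :
    LinearMap.range Z.mulVecLin = LinearMap.ker B.mulVecLin := by
  refine Submodule.eq_of_le_of_finrank_eq ((mul_eq_zero_iff_range_le_ker B Z).1 hBZ) ?_
  have := LinearMap.finrank_range_add_finrank_ker B.mulVecLin
  rw [Module.finrank_fintype_fun_eq_card] at this
  rw [rank, rank] at hrank
  omega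

theorem isUnit_of_rank_eq_card [Field R] [DecidableEq n] {M : Matrix n n R}
    (h : M.rank = Fintype.card n) : IsUnit M := by
  rw [← mulVec_surjective_iff_isUnit, ← coe_mulVecLin, ← LinearMap.range_eq_top]
  exact Submodule.eq_top_of_finrank_eq (by rwa [Module.finrank_fintype_fun_eq_card])

theorem mul_mul_inv_mul_eq_self [CommRing R] [Fintype m] [DecidableEq m] [DecidableEq n]
    {M : Matrix l n R} {B : Matrix m n R} {C : Matrix n m R} {Z : Matrix n k R}
    (hBC : IsUnit (B * C)) (hker : LinearMap.ker B.mulVecLin ≤ LinearMap.range Z.mulVecLin)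
    (hMZ : M * Z = 0) :
    M * (C * (B * C)⁻¹ * B) = M := by
  have hB : B * (1 - C * (B * C)⁻¹ * B) = 0 := by
    rw [Matrix.mul_sub, Matrix.mul_one, ← Matrix.mul_assoc, ← Matrix.mul_assoc,
      mul_nonsing_inv _ ((isUnit_iff_isUnit_det _).1 hBC), Matrix.one_mul, sub_self]
  have hM : M * (1 - C * (B * C)⁻¹ * B) = 0 :=
    (mul_eq_zero_iff_range_le_ker _ _).2 <|
      ((mul_eq_zero_iff_range_le_ker _ _).1 hB).trans <| hker.trans <|
        (mul_eq_zero_iff_range_le_ker _ _).1 hMZ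
  rwa [Matrix.mul_sub, Matrix.mul_one, sub_eq_zero, eq_comm] at hM

theorem one_sub_mul_inv_mul_mul_eq_zero [CommRing R] [DecidableEq n] [DecidableEq k]
    {Z : Matrix n k R} {W : Matrix k n R} (hWZ : IsUnit (W * Z)) :
    (1 - Z * (W * Z)⁻¹ * W) * Z = 0 := by
  rw [Matrix.sub_mul, Matrix.one_mul, Matrix.mul_assoc, Matrix.mul_assoc,
    nonsing_inv_mul _ ((isUnit_iff_isUnit_det _).1 hWZ), Matrix.mul_one, sub_self]

end Matrix

theorem projector_absorbs_orthogonal_projector_general {n m : ℕ}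
    (A : Matrix (Fin n) (Fin n) ℝ) (B : Matrix (Fin m) (Fin n) ℝ)
    (hrB : B.rank = m)
    (Z : Matrix (Fin n) (Fin (n - m)) ℝ) (hBZ : B * Z = 0) (hrZ : Z.rank = n - m)
    (hZAZ : IsUnit (Zᵀ * A * Z)) :
    (1 - (Z * (Zᵀ * A * Z)⁻¹ * Zᵀ) * A) * Bᵀ * (B * Bᵀ)⁻¹ * B =
        1 - (Z * (Zᵀ * A * Z)⁻¹ * Zᵀ) * A ∧
    Bᵀ * (B * Bᵀ)⁻¹ * B * (1 - A * (Z * (Zᵀ * A * Z)⁻¹ * Zᵀ)) =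
        1 - A * (Z * (Zᵀ * A * Z)⁻¹ * Zᵀ) := by
  have hBB : IsUnit (B * Bᵀ) :=
    isUnit_of_rank_eq_card (by rw [rank_self_mul_transpose, hrB, Fintype.card_fin])
  have hker : LinearMap.ker B.mulVecLin ≤ LinearMap.range Z.mulVecLin := by
    refine (range_mulVecLin_eq_ker_of_rank_add_rank hBZ ?_).ge
    have := hrB ▸ B.rank_le_width
    rw [hrB, hrZ, Fintype.card_fin]
    omega
  have absorbs (A' : Matrix (Fin n) (Fin n) ℝ) (hA' : IsUnit (Zᵀ * A' * Z)) :
      (1 - Z * (Zᵀ * A' * Z)⁻¹ * Zᵀ * A') * (Bᵀ * (B * Bᵀ)⁻¹ * B) =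
        1 - Z * (Zᵀ * A' * Z)⁻¹ * Zᵀ * A' := by
    refine mul_mul_inv_mul_eq_self hBB hker ?_
    simpa only [Matrix.mul_assoc] using one_sub_mul_inv_mul_mul_eq_zero (W := Zᵀ * A') hA'
  refine ⟨by simpa only [Matrix.mul_assoc] using absorbs A hZAZ, ?_⟩
  have hZAZ' : IsUnit (Zᵀ * Aᵀ * Z) := by
    simpa [transpose_mul, Matrix.mul_assoc] using (isUnit_transpose _).2 hZAZ
  simpa [transpose_mul, transpose_nonsing_inv, Matrix.mul_assoc] using
    congrArg transpose (absorbs Aᵀ hZAZ')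

/-- with `Z` a null-space matrix of `B`, `ZᵀAZ` invertible and
`V = Z (ZᵀAZ)⁻¹ Zᵀ`, we have `(I - VA) Bᵀ (BBᵀ)⁻¹ B = I - VA`, and equivalently
`Bᵀ (BBᵀ)⁻¹ B (I - AV) = I - AV`. -/
theorem projector_absorbs_orthogonal_projector {n m : ℕ} (hm : 0 < m) (hmn : m < n)
    (A : Matrix (Fin n) (Fin n) ℝ) (B : Matrix (Fin m) (Fin n) ℝ)
    (hrB : B.rank = m)
    (Z : Matrix (Fin n) (Fin (n - m)) ℝ) (hBZ : B * Z = 0) (hrZ : Z.rank = n - m)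
    (hZAZ : IsUnit (Zᵀ * A * Z)) :
    (1 - (Z * (Zᵀ * A * Z)⁻¹ * Zᵀ) * A) * Bᵀ * (B * Bᵀ)⁻¹ * B =
        1 - (Z * (Zᵀ * A * Z)⁻¹ * Zᵀ) * A ∧
    Bᵀ * (B * Bᵀ)⁻¹ * B * (1 - A * (Z * (Zᵀ * A * Z)⁻¹ * Zᵀ)) =
        1 - A * (Z * (Zᵀ * A * Z)⁻¹ * Zᵀ) :=
  projector_absorbs_orthogonal_projector_general A B hrB Z hBZ hrZ hZAZ
end

section
/- Let n and m be positive integers with m < n, let A be an n×n real symmetric positive semidefinite matrix, and let B be an m×n real matrix with rank m. Then the (n+m)×(n+m) block matrix K = [[A, Bᵀ],[B, 0]] is invertible if and only if the kernel of A and the kernel of B intersect only in the zero vector. -/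
open Matrix

/-- for `A` symmetric positive semidefinite and `B` of full row rank, the
saddle-point matrix `K = [[A, Bᵀ],[B, 0]]` is invertible iff `ker A ∩ ker B = {0}`. -/
theorem saddle_invertible_iff_ker_inter {n m : ℕ} (hm : 0 < m) (hmn : m < n)
    (A : Matrix (Fin n) (Fin n) ℝ) (B : Matrix (Fin m) (Fin n) ℝ)
    (hA : A.PosSemidef) (hrB : B.rank = m) :
    IsUnit (Matrix.fromBlocks A Bᵀ B 0) ↔
      ∀ x : Fin n → ℝ, A *ᵥ x = 0 → B *ᵥ x = 0 → x = 0 := by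
  have hBrows : LinearIndependent ℝ (fun i => B i) := by
    rw [linearIndependent_iff_card_eq_finrank_span]
    rw [Set.finrank, show (fun i => B i) = B.row from rfl, ← Matrix.rank_eq_finrank_span_row, hrB, Fintype.card_fin]
  have hBT : Function.Injective (Bᵀ.mulVec) := by
    rw [Matrix.mulVec_injective_iff]
    exact hBrows
  rw [← Matrix.mulVec_injective_iff_isUnit]
  constructor
  · intro hinj x hAx hBx
    have h0 : fromBlocks A Bᵀ B 0 *ᵥ Sum.elim x 0 = fromBlocks A Bᵀ B 0 *ᵥ 0 := by
      rw [Matrix.fromBlocks_mulVec, Matrix.mulVec_zero]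
      simp [hAx, hBx]
    have := hinj h0
    funext i
    have := congrFun this (Sum.inl i)
    simpa using this
  · intro h
    intro u v huv
    rw [← sub_eq_zero]
    have hKv : fromBlocks A Bᵀ B 0 *ᵥ (u - v) = 0 := by
      rw [Matrix.mulVec_sub, huv, sub_self]
    set w := u - v with hw
    have hwe : w = Sum.elim (w ∘ Sum.inl) (w ∘ Sum.inr) := by
      funext i; cases i <;> rfl
    set x := w ∘ Sum.inl
    set y := w ∘ Sum.inr
    rw [hwe, Matrix.fromBlocks_mulVec] at hKv
    have h1 : A *ᵥ x + Bᵀ *ᵥ y = 0 := by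
      have := congrFun hKv
      funext i; simpa using this (Sum.inl i)
    have h2 : B *ᵥ x = 0 := by
      have := congrFun hKv
      funext i; simpa using this (Sum.inr i)
    have hdot : x ⬝ᵥ (A *ᵥ x) = 0 := by
      have hAx : A *ᵥ x = -(Bᵀ *ᵥ y) := by linear_combination (norm := module) h1
      rw [hAx, dotProduct_neg, dotProduct_mulVec, vecMul_transpose, h2, zero_dotProduct,
        neg_zero]
    have hAx0 : A *ᵥ x = 0 := by
      rw [← hA.dotProduct_mulVec_zero_iff x]
      simpa using hdot
    have hx0 : x = 0 := h x hAx0 h2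
    have hy0 : y = 0 := by
      apply hBT
      rw [Matrix.mulVec_zero]
      have : Bᵀ *ᵥ y = 0 := by
        have := h1
        rw [hAx0, zero_add] at this
        exact this
      exact this
    rw [hwe, hx0, hy0]
    simp
end

section
/- Let n and m be positive integers with m < n, let A be an n×n real symmetric positive definite matrix, and let B be an m×n real matrix with rank m. Let K = [[A, Bᵀ],[B, 0]], let M₁ = [[A, 0],[0, BA⁻¹Bᵀ]] be the block diagonal matrix with diagonal blocks A and BA⁻¹Bᵀ, and set T = M₁⁻¹·K. Then (T − I)·(T² − T − I) = 0, where I is the (n+m)×(n+m) identity; consequently T has at most the three distinct eigenvalues 1, (1+√5)/2, and (1−√5)/2. -/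
open Matrix

lemma fromBlocks_sub' {l m o p : Type*} {R : Type*} [SubtractionMonoid R]
    (A A' : Matrix l o R) (B B' : Matrix l p R) (C C' : Matrix m o R) (D D' : Matrix m p R) :
    fromBlocks A B C D - fromBlocks A' B' C' D' =
      fromBlocks (A - A') (B - B') (C - C') (D - D') := by
  ext (i | i) (j | j) <;> simp

lemma mgw_block_identity {n m : ℕ} (X : Matrix (Fin n) (Fin m) ℝ)
    (Y : Matrix (Fin m) (Fin n) ℝ) (hYX : Y * X = 1) :
    (fromBlocks 1 X Y 0 - 1) *
      (fromBlocks 1 X Y 0 * fromBlocks 1 X Y 0 - fromBlocks 1 X Y 0 - 1) = 0 := by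
  have h1 : fromBlocks (1 : Matrix (Fin n) (Fin n) ℝ) X Y 0 - 1
      = fromBlocks 0 X Y (-1) := by
    rw [← fromBlocks_one, fromBlocks_sub']
    simp
  have hsq : fromBlocks (1 : Matrix (Fin n) (Fin n) ℝ) X Y 0 *
      fromBlocks 1 X Y 0 = fromBlocks (1 + X * Y) X Y 1 := by
    rw [fromBlocks_multiply]
    simp [hYX]
  have h2 : fromBlocks ((1 : Matrix (Fin n) (Fin n) ℝ) + X * Y) X Y 1
      - fromBlocks 1 X Y 0 - 1 = fromBlocks (X * Y - 1) 0 0 0 := by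
    rw [← fromBlocks_one, fromBlocks_sub', fromBlocks_sub']
    congr 1 <;> abel
  rw [h1, hsq, h2, fromBlocks_multiply]
  have h3 : Y * (X * Y - 1) = 0 := by
    rw [Matrix.mul_sub, ← Matrix.mul_assoc, hYX, Matrix.one_mul, Matrix.mul_one, sub_self]
  simp [h3, ← fromBlocks_zero]

/-- The preconditioned operator `T = M₁⁻¹ K` where `K = [[A, Bᵀ],[B, 0]]` and
`M₁ = [[A, 0],[0, B A⁻¹ Bᵀ]]`. -/
noncomputable def precondT1 {n m : ℕ} (A : Matrix (Fin n) (Fin n) ℝ)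
    (B : Matrix (Fin m) (Fin n) ℝ) :
    Matrix (Fin n ⊕ Fin m) (Fin n ⊕ Fin m) ℝ :=
  (Matrix.fromBlocks A 0 0 (B * A⁻¹ * Bᵀ))⁻¹ * Matrix.fromBlocks A Bᵀ B 0

/-- Murphy–Golub–Wathen: for `A` symmetric positive definite and `B` of
full row rank, the preconditioned operator `T = M₁⁻¹ K` satisfies
`(T - I)(T² - T - I) = 0`; consequently `T` has at most the three distinct eigenvalues
`1`, `(1 + √5)/2` and `(1 - √5)/2`. -/
theorem mgw_three_eigenvalues {n m : ℕ} (hn : 0 < n) (hm : 0 < m) (hmn : m < n)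
    (A : Matrix (Fin n) (Fin n) ℝ) (B : Matrix (Fin m) (Fin n) ℝ)
    (hA : A.PosDef) (hrB : B.rank = m) :
    (precondT1 A B - 1) *
        (precondT1 A B * precondT1 A B - precondT1 A B - 1) = 0 ∧
    ∀ (μ : ℝ) (x : Fin n ⊕ Fin m → ℝ), x ≠ 0 → precondT1 A B *ᵥ x = μ • x →
      μ = 1 ∨ μ = (1 + Real.sqrt 5) / 2 ∨ μ = (1 - Real.sqrt 5) / 2 := by
  classical
  set S : Matrix (Fin m) (Fin m) ℝ := B * A⁻¹ * Bᵀ with hS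
  have hAu : IsUnit A := hA.isUnit
  have hAdet : IsUnit A.det := (isUnit_iff_isUnit_det A).mp hAu
  have hli : LinearIndependent ℝ (fun i => B i) := by
    rw [linearIndependent_iff_card_eq_finrank_span, Fintype.card_fin, Set.finrank]
    exact hrB.symm.trans (rank_eq_finrank_span_row B)
  have hBt : ∀ z : Fin m → ℝ, Bᵀ *ᵥ z = 0 → z = 0 := by
    intro z hz
    have hinj := Matrix.vecMul_injective_iff.mpr hli
    have : z ᵥ* B = (0 : Fin m → ℝ) ᵥ* B := by
      rw [← mulVec_transpose, hz, zero_vecMul]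
    exact hinj this
  have hSu : IsUnit S := by
    rw [← Matrix.mulVec_injective_iff_isUnit]
    intro x y hxy
    have hz : S *ᵥ (x - y) = 0 := by
      rw [mulVec_sub, hxy, sub_self]
    by_contra hne
    have hzne : x - y ≠ 0 := sub_ne_zero.mpr fun h => hne (by rw [h])
    have hBz : Bᵀ *ᵥ (x - y) ≠ 0 := fun h => hzne (hBt _ h)
    have hpos := hA.inv.dotProduct_mulVec_pos hBz
    have hcalc : star (Bᵀ *ᵥ (x - y)) ⬝ᵥ (A⁻¹ *ᵥ (Bᵀ *ᵥ (x - y)))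
        = (x - y) ⬝ᵥ (S *ᵥ (x - y)) := by
      simp only [hS, star_trivial, ← mulVec_mulVec, dotProduct_mulVec, mulVec_transpose,
        vecMul_vecMul]
    rw [hcalc, hz, dotProduct_zero] at hpos
    exact lt_irrefl 0 hpos
  have hSdet : IsUnit S.det := (isUnit_iff_isUnit_det S).mp hSu
  have hAinv : A⁻¹ * A = 1 := nonsing_inv_mul A hAdet
  have hSinv : S⁻¹ * S = 1 := nonsing_inv_mul S hSdet
  set X : Matrix (Fin n) (Fin m) ℝ := A⁻¹ * Bᵀ with hX
  set Y : Matrix (Fin m) (Fin n) ℝ := S⁻¹ * B with hY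
  have hYX : Y * X = 1 := by
    have h : Y * X = S⁻¹ * S := by rw [hY, hX, hS]; simp only [Matrix.mul_assoc]
    rw [h, hSinv]
  have hT : precondT1 A B = fromBlocks 1 X Y 0 := by
    rw [precondT1, ← hS,
      inv_fromBlocks_zero₂₁_of_isUnit_iff A 0 S (iff_of_true hAu hSu),
      fromBlocks_multiply]
    simp only [Matrix.zero_mul, Matrix.mul_zero, neg_zero, add_zero, zero_add,
      hAinv, ← hX, ← hY]
  have key : (precondT1 A B - 1) *
      (precondT1 A B * precondT1 A B - precondT1 A B - 1) = 0 := by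
    rw [hT]; exact mgw_block_identity X Y hYX
  refine ⟨key, ?_⟩
  intro μ x hx hTx
  set T := precondT1 A B with hTdef
  have e2 : (T * T) *ᵥ x = (μ * μ) • x := by
    rw [← mulVec_mulVec, hTx, mulVec_smul, hTx, smul_smul]
  have ev : (T * T - T - 1) *ᵥ x = (μ * μ - μ - 1) • x := by
    rw [sub_mulVec, sub_mulVec, e2, hTx, one_mulVec, sub_smul, sub_smul, one_smul]
  have e3 : ((T - 1) * (T * T - T - 1)) *ᵥ x = ((μ * μ - μ - 1) * (μ - 1)) • x := by
    rw [← mulVec_mulVec, ev, mulVec_smul, sub_mulVec, hTx, one_mulVec]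
    rw [show μ • x - x = (μ - 1) • x by rw [sub_smul, one_smul], smul_smul]
  have hfin : ((μ * μ - μ - 1) * (μ - 1)) • x = 0 := by
    rw [← e3, key, zero_mulVec]
  have hzero : (μ * μ - μ - 1) * (μ - 1) = 0 := by
    rcases smul_eq_zero.mp hfin with h | h
    · exact h
    · exact absurd h hx
  rcases mul_eq_zero.mp hzero with h | h
  · have h5 : Real.sqrt 5 * Real.sqrt 5 = 5 :=
      Real.mul_self_sqrt (by norm_num)
    have hfac : (2 * μ - 1 - Real.sqrt 5) * (2 * μ - 1 + Real.sqrt 5) = 0 := by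
      nlinarith [h5, h]
    rcases mul_eq_zero.mp hfac with h' | h'
    · right; left; linarith
    · right; right; linarith
  · left; linarith
end
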